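/- (Row-stochasticity of the Kron accompanying matrix) Let B be the susceptance matrix of a connected weighted graph partitioned into loads and inverters. Then B_II is negative definite (hence invertible), and the matrix −B_II^{−1}B_IL ∈ ℝ^{m×n} is row-stochastic: all its entries are nonnegative and each row sums to 1 (equivalently, −B_II^{−1}B_IL·1_n = 1_m and the entries of B_II^{−1}B_IL are nonpositive). -/

import Mathlib

open Matrix

/-! The quadratic form of `-B` is `½ ∑ᵢⱼ Bᵢⱼ (zᵢ - zⱼ)²`. On vectors vanishing at the loads it
vanishes only if `z` is constant along every edge, hence `z = 0` by connectivity: `-B_II` is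
positive definite. A column `x` of `K = -B_II⁻¹ B_IL` solves `B_II x = -B_IL eⱼ ≤ 0`; extended by
`0` on the loads, a negative minimum of `x` would propagate along edges (at a minimum `(B z)ᵢ` is
a sum of nonnegative terms) up to a load, so `K ≥ 0` (minimum principle). Finally the zero row
sums of `B` give `B_IL 1 = -B_II 1`, i.e. `K 1 = 1`. -/

def suscGraph {V : Type*} (B : Matrix V V ℝ) : SimpleGraph V where
  Adj i j := i ≠ j ∧ 0 < B i j ∧ 0 < B j i
  symm := ⟨fun _ _ h => ⟨h.1.symm, h.2.2, h.2.1⟩⟩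
  loopless := ⟨fun _ h => h.1 rfl⟩

def IsSusceptance {V : Type*} [Fintype V] [DecidableEq V] (B : Matrix V V ℝ) : Prop :=
  B.IsSymm ∧ (∀ i j, i ≠ j → 0 ≤ B i j) ∧
    (∀ i, B i i = -∑ j ∈ Finset.univ.erase i, B i j) ∧ (suscGraph B).Connected

theorem SimpleGraph.Reachable.mem_of_adj_closed {V : Type*} {G : SimpleGraph V} {S : Set V}
    (hS : ∀ a b, G.Adj a b → a ∈ S → b ∈ S) {u v : V} (h : G.Reachable u v) (hu : u ∈ S) :
    v ∈ S := by
  obtain ⟨p⟩ := h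
  induction p with
  | nil => exact hu
  | cons hab _ ih => exact ih (hS _ _ hab hu)

namespace IsSusceptance

variable {V : Type*} [Fintype V] [DecidableEq V] {B : Matrix V V ℝ}

theorem sum_row_eq_zero (hB : IsSusceptance B) (i : V) : ∑ j, B i j = 0 := by
  rw [← Finset.add_sum_erase _ _ (Finset.mem_univ i), hB.2.2.1 i, neg_add_cancel]

theorem mulVec_apply (hB : IsSusceptance B) (z : V → ℝ) (i : V) :
    (B *ᵥ z) i = ∑ j, B i j * (z j - z i) := by
  simp only [mul_sub, Finset.sum_sub_distrib, ← Finset.sum_mul, hB.sum_row_eq_zero, zero_mul,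
    sub_zero]
  rfl

theorem dotProduct_neg_mulVec (hB : IsSusceptance B) (z : V → ℝ) :
    z ⬝ᵥ (-B *ᵥ z) = (∑ i, ∑ j, B i j * (z i - z j) ^ 2) / 2 := by
  have hS : z ⬝ᵥ (-B *ᵥ z) = ∑ i, ∑ j, B i j * (z i * (z i - z j)) := by
    simp only [dotProduct, neg_mulVec, Pi.neg_apply, hB.mulVec_apply, ← Finset.sum_neg_distrib,
      Finset.mul_sum]
    refine Finset.sum_congr rfl fun i _ => Finset.sum_congr rfl fun j _ => by ring
  have hS' : z ⬝ᵥ (-B *ᵥ z) = ∑ i, ∑ j, B i j * (z j * (z j - z i)) := by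
    rw [hS, Finset.sum_comm]
    simp only [hB.1.apply]
  rw [eq_div_iff two_ne_zero, mul_two]
  nth_rewrite 2 [hS']
  rw [hS, ← Finset.sum_add_distrib]
  refine Finset.sum_congr rfl fun i _ => ?_
  rw [← Finset.sum_add_distrib]
  exact Finset.sum_congr rfl fun j _ => by ring

theorem mul_nonneg_of_apply_eq_zero (hB : IsSusceptance B) {w : V → ℝ} (hw : ∀ j, 0 ≤ w j)
    {a : V} (hwa : w a = 0) (j : V) : 0 ≤ B a j * w j := by
  rcases eq_or_ne a j with rfl | haj
  · rw [hwa, mul_zero]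
  · exact mul_nonneg (hB.2.1 a j haj) (hw j)

theorem sum_mul_nonneg (hB : IsSusceptance B) {w : V → ℝ} (hw : ∀ j, 0 ≤ w j)
    {a : V} (hwa : w a = 0) : 0 ≤ ∑ j, B a j * w j :=
  Finset.sum_nonneg fun j _ => hB.mul_nonneg_of_apply_eq_zero hw hwa j

theorem eq_zero_of_adj_of_sum_mul_nonpos (hB : IsSusceptance B) {w : V → ℝ}
    (hw : ∀ j, 0 ≤ w j) {a b : V} (hwa : w a = 0) (hab : (suscGraph B).Adj a b)
    (hsum : ∑ j, B a j * w j ≤ 0) : w b = 0 := by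
  have hterms := (Finset.sum_eq_zero_iff_of_nonneg fun j _ =>
    hB.mul_nonneg_of_apply_eq_zero hw hwa j).mp (hsum.antisymm (hB.sum_mul_nonneg hw hwa))
  exact (mul_eq_zero.mp (hterms b (Finset.mem_univ b))).resolve_left hab.2.1.ne'

theorem nonneg_of_mulVec_nonpos (hB : IsSusceptance B) {z : V → ℝ}
    (hz : ∀ i, z i < 0 → (B *ᵥ z) i ≤ 0) {v : V} (hv : 0 ≤ z v) : 0 ≤ z := by
  obtain ⟨u, -, hu⟩ := Finset.exists_min_image Finset.univ z ⟨v, Finset.mem_univ v⟩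
  intro i
  by_contra! hi
  have hzu : z u < 0 := (hu i (Finset.mem_univ i)).trans_lt hi
  have hclosed : ∀ a b, (suscGraph B).Adj a b → z a = z u → z b = z u := by
    intro a b hab ha
    have hw : ∀ j, 0 ≤ z j - z a := fun j => ha ▸ sub_nonneg.mpr (hu j (Finset.mem_univ j))
    have hsum : ∑ j, B a j * (z j - z a) ≤ 0 := hB.mulVec_apply z a ▸ hz a (ha ▸ hzu)
    linarith [hB.eq_zero_of_adj_of_sum_mul_nonpos hw (sub_self _) hab hsum]
  have hvu : z v = z u := (hB.2.2.2.preconnected u v).mem_of_adj_closed (S := {a | z a = z u})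
    hclosed rfl
  linarith

theorem eq_of_sum_sq_eq_zero (hB : IsSusceptance B) {z : V → ℝ}
    (hz : ∑ i, ∑ j, B i j * (z i - z j) ^ 2 = 0) (u v : V) : z u = z v := by
  have hinner : ∀ a, 0 ≤ ∑ j, B a j * (z a - z j) ^ 2 := fun a =>
    hB.sum_mul_nonneg (fun j => sq_nonneg _) (by simp)
  have hclosed : ∀ a b, (suscGraph B).Adj a b → z a = z u → z b = z u := by
    intro a b hab ha
    have hsum := (Finset.sum_eq_zero_iff_of_nonneg fun a _ => hinner a).mp hz a
      (Finset.mem_univ a)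
    have := hB.eq_zero_of_adj_of_sum_mul_nonpos (fun j => sq_nonneg (z a - z j)) (by simp) hab
      hsum.le
    rw [← ha]
    linarith [pow_eq_zero_iff (n := 2) two_ne_zero |>.mp this]
  exact ((hB.2.2.2.preconnected u v).mem_of_adj_closed (S := {a | z a = z u}) hclosed rfl).symm

end IsSusceptance

section Blocks

variable {ι κ R : Type*} [Fintype ι] [Fintype κ]

theorem Matrix.mulVec_sum_elim_zero_inr [NonUnitalNonAssocSemiring R]
    (B : Matrix (ι ⊕ κ) (ι ⊕ κ) R) (x : κ → R) (k : κ) :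
    (B *ᵥ Sum.elim 0 x) (Sum.inr k) = (B.toBlocks₂₂ *ᵥ x) k := by
  simp [mulVec, dotProduct, Fintype.sum_sum_type, toBlocks₂₂]

theorem Matrix.sum_elim_zero_dotProduct_mulVec [NonUnitalNonAssocSemiring R]
    (B : Matrix (ι ⊕ κ) (ι ⊕ κ) R) (x : κ → R) :
    Sum.elim 0 x ⬝ᵥ (B *ᵥ Sum.elim 0 x) = x ⬝ᵥ (B.toBlocks₂₂ *ᵥ x) := by
  simp only [dotProduct, Fintype.sum_sum_type, Sum.elim_inl, Pi.zero_apply, zero_mul,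
    Finset.sum_const_zero, zero_add, Sum.elim_inr, mulVec_sum_elim_zero_inr]

variable [DecidableEq ι] [DecidableEq κ] {B : Matrix (ι ⊕ κ) (ι ⊕ κ) ℝ}

namespace IsSusceptance

theorem toBlocks₂₁_mulVec_one (hB : IsSusceptance B) :
    B.toBlocks₂₁ *ᵥ 1 = -(B.toBlocks₂₂ *ᵥ 1) := by
  ext k
  have := hB.sum_row_eq_zero (Sum.inr k)
  rw [Fintype.sum_sum_type] at this
  simp only [mulVec, dotProduct, Pi.one_apply, mul_one, Pi.neg_apply, toBlocks₂₁, toBlocks₂₂,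
    of_apply]
  linarith

variable [Nonempty ι]

theorem nonneg_of_toBlocks₂₂_mulVec_nonpos (hB : IsSusceptance B) {x : κ → ℝ}
    (hx : B.toBlocks₂₂ *ᵥ x ≤ 0) : 0 ≤ x := by
  have hz : ∀ a, (Sum.elim 0 x : ι ⊕ κ → ℝ) a < 0 → (B *ᵥ Sum.elim 0 x) a ≤ 0 := by
    rintro (i | k) ha
    · exact absurd ha (lt_irrefl 0)
    · exact (B.mulVec_sum_elim_zero_inr x k).trans_le (hx k)
  obtain ⟨i⟩ := ‹Nonempty ι›
  exact fun k => hB.nonneg_of_mulVec_nonpos hz (v := Sum.inl i) le_rfl (Sum.inr k)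

theorem posDef_neg_toBlocks₂₂ (hB : IsSusceptance B) : (-B.toBlocks₂₂).PosDef := by
  refine posDef_iff_dotProduct_mulVec.mpr ⟨?_, fun x hx => ?_⟩
  · ext k l
    exact congrArg Neg.neg (hB.1.apply (Sum.inr k) (Sum.inr l))
  let z : ι ⊕ κ → ℝ := Sum.elim 0 x
  have hQ : star x ⬝ᵥ (-B.toBlocks₂₂ *ᵥ x) = (∑ a, ∑ b, B a b * (z a - z b) ^ 2) / 2 := by
    rw [star_trivial, ← hB.dotProduct_neg_mulVec, neg_mulVec, neg_mulVec, dotProduct_neg,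
      dotProduct_neg, sum_elim_zero_dotProduct_mulVec]
  have hQ_nonneg : 0 ≤ ∑ a, ∑ b, B a b * (z a - z b) ^ 2 :=
    Finset.sum_nonneg fun a _ => hB.sum_mul_nonneg (fun b => sq_nonneg _) (by simp)
  refine hQ ▸ div_pos (hQ_nonneg.lt_of_ne fun hQ_zero => hx ?_) two_pos
  obtain ⟨i⟩ := ‹Nonempty ι›
  exact funext fun k => hB.eq_of_sum_sq_eq_zero hQ_zero.symm (Sum.inr k) (Sum.inl i)

end IsSusceptance

end Blocks

theorem kron_accompanying_rowStochastic_general {n m : ℕ} (hn : 0 < n)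
    (B : Matrix (Fin n ⊕ Fin m) (Fin n ⊕ Fin m) ℝ) (hB : IsSusceptance B) :
    (-B.toBlocks₂₂).PosDef ∧ IsUnit B.toBlocks₂₂.det ∧
    (∀ i j, 0 ≤ (-(B.toBlocks₂₂⁻¹ * B.toBlocks₂₁)) i j) ∧
    (∀ i, ∑ j, (-(B.toBlocks₂₂⁻¹ * B.toBlocks₂₁)) i j = 1) := by
  have : Nonempty (Fin n) := ⟨⟨0, hn⟩⟩
  set A := B.toBlocks₂₂
  set K := -(A⁻¹ * B.toBlocks₂₁)
  have hA : IsUnit A.det :=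
    (isUnit_iff_isUnit_det _).mp (by simpa using hB.posDef_neg_toBlocks₂₂.isUnit.neg)
  have hAK : A * K = -B.toBlocks₂₁ := by rw [Matrix.mul_neg, mul_nonsing_inv_cancel_left _ _ hA]
  refine ⟨hB.posDef_neg_toBlocks₂₂, hA, fun i j => ?_, fun i => ?_⟩
  · have hcol : A *ᵥ K.col j ≤ 0 := by
      intro k
      rw [← mulVec_single_one, mulVec_mulVec, hAK, neg_mulVec, mulVec_single_one]
      exact neg_nonpos.mpr (hB.2.1 _ _ Sum.inr_ne_inl)
    exact hB.nonneg_of_toBlocks₂₂_mulVec_nonpos hcol i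
  · have hK : K *ᵥ 1 = 1 := by
      rw [neg_mulVec, ← mulVec_mulVec, hB.toBlocks₂₁_mulVec_one, mulVec_neg, neg_neg,
        mulVec_mulVec, nonsing_inv_mul _ hA, one_mulVec]
    simpa [mulVec, dotProduct] using congrFun hK i

/-- Row-stochasticity of the Kron accompanying matrix: `B_II` is
negative definite (hence invertible), and `-B_II⁻¹ B_IL` is row-stochastic: its
entries are nonnegative and each of its rows sums to 1. -/
theorem kron_accompanying_rowStochastic {n m : ℕ} (hn : 0 < n) (hm : 0 < m)
    (B : Matrix (Fin n ⊕ Fin m) (Fin n ⊕ Fin m) ℝ) (hB : IsSusceptance B) :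
    (-B.toBlocks₂₂).PosDef ∧ IsUnit B.toBlocks₂₂.det ∧
    (∀ i j, 0 ≤ (-(B.toBlocks₂₂⁻¹ * B.toBlocks₂₁)) i j) ∧
    (∀ i, ∑ j, (-(B.toBlocks₂₂⁻¹ * B.toBlocks₂₁)) i j = 1) :=
  kron_accompanying_rowStochastic_general hn B hB
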